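/- Suppose g_ρ is a smooth one-parameter family of metrics with g'' = 2Λ^{(1)} + (1/2) g^{kl} g'_{ik} g'_{jl} and the recursion ∂_ρ Λ^{(k)}_{ij} = Λ^{(k+1)}_{ij} + g^{lm} g'_{m(i} Λ^{(k)}_{j)l}. Then for each k ≥ 2, ∂_ρ^k g_{ij} = 2Λ^{(k-1)}_{ij} + (terms that are polynomial contractions of g', g^{-1}, Λ^{(1)}, …, Λ^{(k-2)}). -/

import Mathlib

open Matrix
open scoped ContDiff

attribute [local instance] Matrix.frobeniusNormedAddCommGroup Matrix.frobeniusNormedSpace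

attribute [local instance] Matrix.frobeniusNormedRing Matrix.frobeniusNormedAlgebra

section Aux

variable {n : ℕ}

/-- Functions that are pointwise polynomial contractions of `g'`, `g⁻¹`, `Λ 1, …, Λ m`. -/
inductive Good (g : ℝ → Matrix (Fin n) (Fin n) ℝ)
    (Λ : ℕ → ℝ → Matrix (Fin n) (Fin n) ℝ) (m : ℕ) :
    (ℝ → Matrix (Fin n) (Fin n) ℝ) → Prop
  | derivg : Good g Λ m (fun ρ => deriv g ρ)
  | invg : Good g Λ m (fun ρ => (g ρ)⁻¹)
  | lam (j) (h1 : 1 ≤ j) (h2 : j ≤ m) : Good g Λ m (fun ρ => Λ j ρ)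
  | add (f₁ f₂) : Good g Λ m f₁ → Good g Λ m f₂ → Good g Λ m (fun ρ => f₁ ρ + f₂ ρ)
  | smul (c : ℝ) (f) : Good g Λ m f → Good g Λ m (fun ρ => c • f ρ)
  | mul (f₁ f₂) : Good g Λ m f₁ → Good g Λ m f₂ → Good g Λ m (fun ρ => f₁ ρ * f₂ ρ)

variable {g : ℝ → Matrix (Fin n) (Fin n) ℝ} {Λ : ℕ → ℝ → Matrix (Fin n) (Fin n) ℝ}

theorem Good.mono {m m' : ℕ} {f} (h : Good g Λ m f) (hm : m ≤ m') : Good g Λ m' f := by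
  induction h with
  | derivg => exact .derivg
  | invg => exact .invg
  | lam j h1 h2 => exact .lam j h1 (h2.trans hm)
  | add f₁ f₂ _ _ ih₁ ih₂ => exact .add f₁ f₂ ih₁ ih₂
  | smul c f _ ih => exact .smul c f ih
  | mul f₁ f₂ _ _ ih₁ ih₂ => exact .mul f₁ f₂ ih₁ ih₂

theorem contDiff_inv_g (hg_smooth : ContDiff ℝ (⊤ : ℕ∞) g) (hg_inv : ∀ ρ, IsUnit (g ρ)) :
    ContDiff ℝ ∞ (fun ρ => (g ρ)⁻¹) := by
  have heq : (fun ρ => (g ρ)⁻¹) = fun ρ => Ring.inverse (g ρ) :=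
    funext fun ρ => Matrix.nonsing_inv_eq_ringInverse _
  rw [heq, contDiff_iff_contDiffAt]
  intro ρ
  have h := contDiffAt_ringInverse (𝕜 := ℝ) (R := Matrix (Fin n) (Fin n) ℝ)
    (n := ∞) (hg_inv ρ).unit
  rw [(hg_inv ρ).unit_spec] at h
  exact h.comp ρ (hg_smooth.of_le (by simp)).contDiffAt

theorem one_le_infty : (1 : WithTop ℕ∞) ≤ ∞ := by
  exact_mod_cast le_top

theorem Good.contDiff (hg_smooth : ContDiff ℝ (⊤ : ℕ∞) g) (hΛ_smooth : ∀ k, ContDiff ℝ (⊤ : ℕ∞) (Λ k))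
    (hg_inv : ∀ ρ, IsUnit (g ρ)) {m : ℕ} {f} (h : Good g Λ m f) : ContDiff ℝ ∞ f := by
  induction h with
  | derivg => exact (contDiff_infty_iff_deriv.mp (hg_smooth.of_le (by simp))).2
  | invg => exact contDiff_inv_g hg_smooth hg_inv
  | lam j h1 h2 => exact (hΛ_smooth j).of_le (by simp)
  | add f₁ f₂ _ _ ih₁ ih₂ => exact ih₁.add ih₂
  | smul c f _ ih => exact ih.const_smul c
  | mul f₁ f₂ _ _ ih₁ ih₂ => exact ih₁.mul ih₂

theorem Good.differentiable (hg_smooth : ContDiff ℝ (⊤ : ℕ∞) g)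
    (hΛ_smooth : ∀ k, ContDiff ℝ (⊤ : ℕ∞) (Λ k)) (hg_inv : ∀ ρ, IsUnit (g ρ))
    {m : ℕ} {f} (h : Good g Λ m f) : Differentiable ℝ f :=
  (h.contDiff hg_smooth hΛ_smooth hg_inv).differentiable (by simp)

theorem deriv_inv_g (hg_smooth : ContDiff ℝ (⊤ : ℕ∞) g) (hg_inv : ∀ ρ, IsUnit (g ρ)) (ρ : ℝ) :
    deriv (fun ρ => (g ρ)⁻¹) ρ = -((g ρ)⁻¹ * deriv g ρ * (g ρ)⁻¹) := by
  have hdi : Differentiable ℝ (fun ρ => (g ρ)⁻¹) :=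
    (contDiff_inv_g hg_smooth hg_inv).differentiable (by simp)
  have hdg : Differentiable ℝ g := hg_smooth.differentiable (by simp)
  have h1 : HasDerivAt (fun τ => (g τ)⁻¹ * g τ)
      (deriv (fun ρ => (g ρ)⁻¹) ρ * g ρ + (g ρ)⁻¹ * deriv g ρ) ρ :=
    ((hdi ρ).hasDerivAt).mul ((hdg ρ).hasDerivAt)
  have h2 : HasDerivAt (fun τ => (g τ)⁻¹ * g τ) 0 ρ := by
    have heq : (fun τ => (g τ)⁻¹ * g τ) = fun _ => (1 : Matrix (Fin n) (Fin n) ℝ) :=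
      funext fun τ => Matrix.nonsing_inv_mul _ ((Matrix.isUnit_iff_isUnit_det _).mp (hg_inv τ))
    rw [heq]; exact hasDerivAt_const _ _
  have h0 : deriv (fun ρ => (g ρ)⁻¹) ρ * g ρ + (g ρ)⁻¹ * deriv g ρ = 0 :=
    h1.unique h2
  have h3 : deriv (fun ρ => (g ρ)⁻¹) ρ * g ρ = -((g ρ)⁻¹ * deriv g ρ) := by
    rw [eq_neg_iff_add_eq_zero]; exact h0
  calc deriv (fun ρ => (g ρ)⁻¹) ρ
      = deriv (fun ρ => (g ρ)⁻¹) ρ * ((g ρ) * (g ρ)⁻¹) := by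
        rw [Matrix.mul_nonsing_inv _ ((Matrix.isUnit_iff_isUnit_det _).mp (hg_inv ρ)), mul_one]
    _ = (deriv (fun ρ => (g ρ)⁻¹) ρ * g ρ) * (g ρ)⁻¹ := by rw [mul_assoc]
    _ = -((g ρ)⁻¹ * deriv g ρ * (g ρ)⁻¹) := by rw [h3, neg_mul]

theorem Good.deriv' (hg_smooth : ContDiff ℝ (⊤ : ℕ∞) g)
    (hΛ_smooth : ∀ k, ContDiff ℝ (⊤ : ℕ∞) (Λ k)) (hg_inv : ∀ ρ, IsUnit (g ρ))
    (hg'' : ∀ ρ, iteratedDeriv 2 g ρ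
      = (2 : ℝ) • Λ 1 ρ + (1/2 : ℝ) • (deriv g ρ * (g ρ)⁻¹ * deriv g ρ))
    (hrec : ∀ k, 1 ≤ k → ∀ ρ, deriv (Λ k) ρ
      = Λ (k+1) ρ + (1/2 : ℝ) • (deriv g ρ * (g ρ)⁻¹ * Λ k ρ
          + Λ k ρ * (g ρ)⁻¹ * deriv g ρ))
    {m : ℕ} {f} (h : Good g Λ m f) : Good g Λ (m+1) (fun ρ => deriv f ρ) := by
  induction h with
  | derivg =>
    have heq : (fun ρ => deriv (fun τ => deriv g τ) ρ)
        = fun ρ => (2 : ℝ) • Λ 1 ρ + (1/2 : ℝ) • (deriv g ρ * (g ρ)⁻¹ * deriv g ρ) := by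
      funext ρ
      rw [← hg'' ρ, iteratedDeriv_succ, iteratedDeriv_one]; rfl
    rw [heq]
    exact .add _ _ (.smul _ _ (.lam 1 le_rfl (Nat.succ_le_succ (Nat.zero_le m))))
      (.smul _ _ (.mul _ _ (.mul _ _ .derivg .invg) .derivg))
  | invg =>
    have heq : (fun ρ => deriv (fun τ => (g τ)⁻¹) ρ)
        = fun ρ => (-1 : ℝ) • ((g ρ)⁻¹ * deriv g ρ * (g ρ)⁻¹) := by
      funext ρ
      rw [deriv_inv_g hg_smooth hg_inv ρ, neg_one_smul]
    rw [heq]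
    exact .smul _ _ (.mul _ _ (.mul _ _ .invg .derivg) .invg)
  | lam j h1 h2 =>
    have heq : (fun ρ => deriv (fun τ => Λ j τ) ρ)
        = fun ρ => Λ (j+1) ρ + (1/2 : ℝ) • (deriv g ρ * (g ρ)⁻¹ * Λ j ρ
            + Λ j ρ * (g ρ)⁻¹ * deriv g ρ) := by
      funext ρ; exact hrec j h1 ρ
    rw [heq]
    exact .add _ _ (.lam (j+1) (Nat.le_succ_of_le h1) (Nat.succ_le_succ h2))
      (.smul _ _ (.add _ _
        (.mul _ _ (.mul _ _ .derivg .invg) (.lam j h1 (h2.trans (Nat.le_succ m))))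
        (.mul _ _ (.mul _ _ (.lam j h1 (h2.trans (Nat.le_succ m))) .invg) .derivg)))
  | add f₁ f₂ h₁ h₂ ih₁ ih₂ =>
    have d₁ := h₁.differentiable hg_smooth hΛ_smooth hg_inv
    have d₂ := h₂.differentiable hg_smooth hΛ_smooth hg_inv
    have heq : (fun ρ => deriv (fun τ => f₁ τ + f₂ τ) ρ)
        = fun ρ => deriv f₁ ρ + deriv f₂ ρ := by
      funext ρ; exact deriv_add (d₁ ρ) (d₂ ρ)
    rw [heq]; exact .add _ _ ih₁ ih₂
  | smul c f hf ih =>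
    have d := hf.differentiable hg_smooth hΛ_smooth hg_inv
    have heq : (fun ρ => deriv (fun τ => c • f τ) ρ) = fun ρ => c • deriv f ρ := by
      funext ρ; exact deriv_const_smul c (d ρ)
    rw [heq]; exact .smul _ _ ih
  | mul f₁ f₂ h₁ h₂ ih₁ ih₂ =>
    have d₁ := h₁.differentiable hg_smooth hΛ_smooth hg_inv
    have d₂ := h₂.differentiable hg_smooth hΛ_smooth hg_inv
    have heq : (fun ρ => deriv (fun τ => f₁ τ * f₂ τ) ρ)
        = fun ρ => deriv f₁ ρ * f₂ ρ + f₁ ρ * deriv f₂ ρ := by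
      funext ρ; exact deriv_mul (d₁ ρ) (d₂ ρ)
    rw [heq]
    exact .add _ _ (.mul _ _ ih₁ (h₂.mono (Nat.le_succ m)))
      (.mul _ _ (h₁.mono (Nat.le_succ m)) ih₂)

theorem Good.mem_adjoin {m : ℕ} {f} (h : Good g Λ m f) (ρ : ℝ) :
    f ρ ∈ Algebra.adjoin ℝ
      ({deriv g ρ, (g ρ)⁻¹} ∪ ((fun j => Λ j ρ) '' (Set.Icc 1 m))) := by
  induction h with
  | derivg => exact Algebra.subset_adjoin (Or.inl (Set.mem_insert _ _))
  | invg => exact Algebra.subset_adjoin (Or.inl (Set.mem_insert_of_mem _ rfl))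
  | lam j h1 h2 => exact Algebra.subset_adjoin (Or.inr ⟨j, ⟨h1, h2⟩, rfl⟩)
  | add f₁ f₂ _ _ ih₁ ih₂ => exact add_mem ih₁ ih₂
  | smul c f _ ih => exact Subalgebra.smul_mem _ ih c
  | mul f₁ f₂ _ _ ih₁ ih₂ => exact mul_mem ih₁ ih₂

end Aux

/-- Inductive step expressing Taylor coefficients of the ambient metric via extended
obstruction tensors.  `g ρ` is a smooth family of (symmetric, invertible) matrices
representing the metric, `Λ k` represents `Λ^{(k)}_{ij} = R_{∞ij∞,∞…∞}`, and the
hypotheses are `g'' = 2Λ^{(1)} + ½ g' g⁻¹ g'` and the recursion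
`∂_ρ Λ^{(k)} = Λ^{(k+1)} + g^{lm} g'_{m(i} Λ^{(k)}_{j)l}`.  The conclusion: for each
`k ≥ 2`, `∂_ρ^k g = 2Λ^{(k-1)} +` a polynomial contraction (i.e. an element of the
`ℝ`-subalgebra generated by) `g'`, `g⁻¹`, `Λ^{(1)}, …, Λ^{(k-2)}`. -/
theorem ambient_taylor_coefficients {n : ℕ}
    (g : ℝ → Matrix (Fin n) (Fin n) ℝ)
    (Λ : ℕ → ℝ → Matrix (Fin n) (Fin n) ℝ)
    (hg_smooth : ContDiff ℝ (⊤ : ℕ∞) g) (hΛ_smooth : ∀ k, ContDiff ℝ (⊤ : ℕ∞) (Λ k))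
    (hg_symm : ∀ ρ, (g ρ).IsSymm) (hg_inv : ∀ ρ, IsUnit (g ρ))
    (hg'' : ∀ ρ, iteratedDeriv 2 g ρ
      = (2 : ℝ) • Λ 1 ρ + (1/2 : ℝ) • (deriv g ρ * (g ρ)⁻¹ * deriv g ρ))
    (hrec : ∀ k, 1 ≤ k → ∀ ρ, deriv (Λ k) ρ
      = Λ (k+1) ρ + (1/2 : ℝ) • (deriv g ρ * (g ρ)⁻¹ * Λ k ρ
          + Λ k ρ * (g ρ)⁻¹ * deriv g ρ)) :
    ∀ k, 2 ≤ k → ∀ ρ,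
      iteratedDeriv k g ρ - (2 : ℝ) • Λ (k-1) ρ ∈
        Algebra.adjoin ℝ
          ({deriv g ρ, (g ρ)⁻¹} ∪ ((fun j => Λ j ρ) '' (Set.Icc 1 (k-2)))) := by
  have key : ∀ k, 2 ≤ k → ∃ F, Good g Λ (k-2) F ∧
      ∀ ρ, iteratedDeriv k g ρ = (2 : ℝ) • Λ (k-1) ρ + F ρ := by
    intro k hk
    induction k, hk using Nat.le_induction with
    | base =>
      refine ⟨fun ρ => (1/2 : ℝ) • (deriv g ρ * (g ρ)⁻¹ * deriv g ρ), ?_, fun ρ => hg'' ρ⟩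
      exact .smul _ _ (.mul _ _ (.mul _ _ .derivg .invg) .derivg)
    | succ k hk ih =>
      obtain ⟨F, hF, hEq⟩ := ih
      have hFd : Differentiable ℝ F := hF.differentiable hg_smooth hΛ_smooth hg_inv
      have hΛd : Differentiable ℝ (Λ (k-1)) :=
        (hΛ_smooth (k-1)).differentiable (by simp)
      refine ⟨fun ρ => (2 : ℝ) • ((1/2 : ℝ) • (deriv g ρ * (g ρ)⁻¹ * Λ (k-1) ρ
          + Λ (k-1) ρ * (g ρ)⁻¹ * deriv g ρ)) + deriv F ρ, ?_, ?_⟩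
      · have h1 : 1 ≤ k - 1 := by omega
        have h2 : k - 1 ≤ k + 1 - 2 := by omega
        have hdF : Good g Λ (k - 2 + 1) (fun ρ => deriv F ρ) :=
          hF.deriv' hg_smooth hΛ_smooth hg_inv hg'' hrec
        exact .add _ _
          (.smul _ _ (.smul _ _ (.add _ _
            (.mul _ _ (.mul _ _ .derivg .invg) (.lam _ h1 h2))
            (.mul _ _ (.mul _ _ (.lam _ h1 h2) .invg) .derivg))))
          (hdF.mono (by omega))
      · intro ρ
        have hfun : iteratedDeriv k g = fun ρ => (2 : ℝ) • Λ (k-1) ρ + F ρ := funext hEq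
        have hk1 : k + 1 - 1 = k := by omega
        rw [iteratedDeriv_succ, hfun, hk1]
        rw [deriv_fun_add (f := fun ρ => (2 : ℝ) • Λ (k-1) ρ) ((hΛd ρ).const_smul (2 : ℝ)) (hFd ρ),
          deriv_fun_const_smul (2 : ℝ) (hΛd ρ)]
        refine (congrArg (· + deriv F ρ) (congrArg ((2 : ℝ) • ·) (hrec (k-1) (by omega) ρ))).trans ?_
        have hk2 : k - 1 + 1 = k := by omega
        rw [hk2, smul_add, add_assoc]
  intro k hk ρ
  obtain ⟨F, hF, hEq⟩ := key k hk
  have hsub : iteratedDeriv k g ρ - (2 : ℝ) • Λ (k-1) ρ = F ρ := by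
    rw [hEq ρ]; abel
  rw [hsub]
  exact hF.mem_adjoin ρ
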